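/- (Dani correspondence) For n ≥ 1 and x ∈ ℝ^n, the vector x is singular if and only if δ(g_k u_x ℤ^{n+1}) → 0 as k → ∞ (k ∈ ℕ); by Mahler's compactness criterion this says exactly that the trajectory {g_k u_x ℤ^{n+1} : k ≥ 0} is divergent in the space of unimodular lattices SL_{n+1}(ℝ)/SL_{n+1}(ℤ). -/

import Mathlib

/-! Write `t = eᵏ`. The lattice `g_k u_x ℤ^{n+1}` consists of the vectors `(tⁿ (q·x + q₀), q / t)`,
so a vector of norm `< ε` in it is an integer solution of `|q·x + q₀| < ε t⁻ⁿ`, `‖q‖ < ε t`;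
with `Q = ε t` this is Dirichlet-type approximation of quality `εⁿ⁺¹ / Qⁿ`, which is what
singularity asks for. Lattice vectors with `q = 0` have norm `≥ 1`, and sampling only at
`t = eᵏ` costs at most a factor `eⁿ` in `ε`. -/

open MeasureTheory Filter

/-- A vector `x ∈ ℝ^n` is singular. -/
def IsSingularVec {n : ℕ} (x : Fin n → ℝ) : Prop :=
  ∀ c : ℝ, 0 < c → ∃ Q₀ : ℝ, 0 < Q₀ ∧ ∀ Q : ℝ, Q₀ ≤ Q →
    ∃ q : Fin n → ℤ, q ≠ 0 ∧ ∃ q₀ : ℤ,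
      |(∑ i, (q i : ℝ) * x i) + (q₀ : ℝ)| < c / Q ^ n ∧ ∀ i, |(q i : ℝ)| ≤ Q

/-- The diagonal matrix `g_k = diag(e^{nk}, e^{-k}, …, e^{-k}) ∈ SL_{n+1}(ℝ)`. -/
noncomputable def gMat (n : ℕ) (k : ℕ) : Matrix (Fin (n+1)) (Fin (n+1)) ℝ :=
  fun i j => if i = j then (if i = 0 then Real.exp ((n : ℝ) * (k : ℝ))
    else Real.exp (-(k : ℝ))) else 0

/-- The unipotent matrix `u_x ∈ SL_{n+1}(ℝ)` with first row `(1, x₁, …, x_n)` and all other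
rows equal to those of the identity. -/
noncomputable def uMat {n : ℕ} (x : Fin n → ℝ) : Matrix (Fin (n+1)) (Fin (n+1)) ℝ :=
  fun i j => if i = j then 1 else if i = 0 then (Fin.cons 0 x : Fin (n+1) → ℝ) j else 0

/-- `δ(g ℤ^m)`: the infimum of the sup-norms of the nonzero vectors of the lattice
`g ℤ^m ⊆ ℝ^m`. -/
noncomputable def latticeDelta {m : ℕ} (g : Matrix (Fin m) (Fin m) ℝ) : ℝ :=
  sInf {t : ℝ | ∃ v : Fin m → ℤ, v ≠ 0 ∧ t = ‖g.mulVec (fun i => (v i : ℝ))‖}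

open Real Topology
open scoped Matrix

section Lattice

variable {m : ℕ}

theorem latticeDelta_nonneg (g : Matrix (Fin m) (Fin m) ℝ) : 0 ≤ latticeDelta g :=
  Real.sInf_nonneg <| by rintro _ ⟨v, -, rfl⟩; positivity

theorem latticeDelta_le_norm (g : Matrix (Fin m) (Fin m) ℝ) {v : Fin m → ℤ} (hv : v ≠ 0) :
    latticeDelta g ≤ ‖g *ᵥ fun i => (v i : ℝ)‖ := by
  unfold latticeDelta
  exact csInf_le ⟨0, by rintro _ ⟨w, -, rfl⟩; positivity⟩ ⟨v, hv, rfl⟩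

theorem exists_norm_lt_of_latticeDelta_lt [NeZero m] (g : Matrix (Fin m) (Fin m) ℝ) {r : ℝ}
    (h : latticeDelta g < r) : ∃ v : Fin m → ℤ, v ≠ 0 ∧ ‖g *ᵥ fun i => (v i : ℝ)‖ < r := by
  unfold latticeDelta at h
  obtain ⟨_, ⟨v, hv, rfl⟩, hlt⟩ :=
    exists_lt_of_csInf_lt ⟨_, Set.mem_ofPred.2 ⟨1, one_ne_zero, rfl⟩⟩ h
  exact ⟨v, hv, hlt⟩

theorem tendsto_latticeDelta_zero_iff [NeZero m] {ι : Type*} {l : Filter ι}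
    (g : ι → Matrix (Fin m) (Fin m) ℝ) :
    Tendsto (fun i => latticeDelta (g i)) l (𝓝 0) ↔
      ∀ ε > 0, ∀ᶠ i in l, ∃ v : Fin m → ℤ, v ≠ 0 ∧ ‖g i *ᵥ fun j => (v j : ℝ)‖ < ε := by
  refine ⟨fun h ε hε => ?_, fun h => tendsto_order.2 ⟨fun a ha => ?_, fun ε hε => ?_⟩⟩
  · filter_upwards [(tendsto_order.1 h).2 ε hε] with i hi
      using exists_norm_lt_of_latticeDelta_lt _ hi
  · exact .of_forall fun i => ha.trans_le (latticeDelta_nonneg _)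
  · filter_upwards [h ε hε] with i ⟨v, hv, hlt⟩
      using (latticeDelta_le_norm _ hv).trans_lt hlt

end Lattice

theorem Fin.norm_cons {E : Type*} [SeminormedAddGroup E] {n : ℕ} (a : E) (f : Fin n → E) :
    ‖(Fin.cons a f : Fin (n + 1) → E)‖ = max ‖a‖ ‖f‖ := by
  refine le_antisymm ((pi_norm_le_iff_of_nonneg (by positivity)).2 fun i => ?_) (max_le ?_ ?_)
  · refine Fin.cases ?_ (fun j => ?_) i
    · simp
    · simpa using (norm_le_pi_norm f j).trans (le_max_right _ _)
  · simpa using norm_le_pi_norm (Fin.cons a f : Fin (n + 1) → E) 0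
  · exact (pi_norm_le_iff_of_nonneg (norm_nonneg _)).2 fun j => by
      simpa using norm_le_pi_norm (Fin.cons a f : Fin (n + 1) → E) j.succ

section Flow

variable {n : ℕ}

theorem gMat_mul_uMat_mulVec (x : Fin n → ℝ) (k : ℕ) (w : Fin (n + 1) → ℝ) :
    (gMat n k * uMat x) *ᵥ w =
      Fin.cons (exp k ^ n * (∑ i, w i.succ * x i + w 0)) (exp (-k) • Fin.tail w) := by
  rw [← Matrix.mulVec_mulVec]
  funext i
  refine Fin.cases ?_ (fun j => ?_) i
  · simp [gMat, uMat, Matrix.mulVec, dotProduct, Fin.sum_univ_succ, (Fin.succ_ne_zero _).symm,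
      ← Real.exp_nat_mul, mul_comm (x _)]
    ring
  · simp [gMat, uMat, Matrix.mulVec, dotProduct, Fin.sum_univ_succ]
    rfl

/-- The sup-norm of `diag(tⁿ, t⁻¹, …, t⁻¹) u_x (q₀, q)`; `g_k` is the case `t = eᵏ`. -/
noncomputable def flowNorm (x : Fin n → ℝ) (t : ℝ) (q₀ : ℤ) (q : Fin n → ℤ) : ℝ :=
  max (t ^ n * |∑ i, (q i : ℝ) * x i + q₀|) (‖fun i => (q i : ℝ)‖ / t)

theorem norm_gMat_mul_uMat_mulVec (x : Fin n → ℝ) (k : ℕ) (v : Fin (n + 1) → ℤ) :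
    ‖(gMat n k * uMat x) *ᵥ fun i => (v i : ℝ)‖ = flowNorm x (exp k) (v 0) (Fin.tail v) := by
  rw [gMat_mul_uMat_mulVec, Fin.norm_cons, norm_mul, norm_smul,
    Real.norm_of_nonneg (by positivity : 0 ≤ exp k ^ n), Real.norm_of_nonneg (exp_pos _).le,
    exp_neg, inv_mul_eq_div]
  rfl

theorem one_le_flowNorm_zero (x : Fin n → ℝ) {t : ℝ} (ht : 1 ≤ t) {q₀ : ℤ} (hq₀ : q₀ ≠ 0) :
    1 ≤ flowNorm x t q₀ 0 := by
  refine le_max_of_le_left ?_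
  simp only [Pi.zero_apply, Int.cast_zero, zero_mul, Finset.sum_const_zero, zero_add]
  exact one_le_mul_of_one_le_of_one_le (one_le_pow₀ ht) (by exact_mod_cast Int.one_le_abs hq₀)

def HasShortVector (x : Fin n → ℝ) (t ε : ℝ) : Prop :=
  ∃ q : Fin n → ℤ, q ≠ 0 ∧ ∃ q₀ : ℤ, flowNorm x t q₀ q < ε

theorem HasShortVector.of_le {x : Fin n → ℝ} {s t ε : ℝ} (h : HasShortVector x s ε) (hs : 0 < s)
    (hst : s ≤ t) : HasShortVector x t ((t / s) ^ n * ε) := by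
  obtain ⟨q, hq, q₀, hlt⟩ := h
  have hpow : 0 < (t / s) ^ n := pow_pos (div_pos (hs.trans_le hst) hs) n
  refine ⟨q, hq, q₀, lt_of_le_of_lt ?_ (mul_lt_mul_of_pos_left hlt hpow)⟩
  rw [flowNorm, flowNorm, mul_max_of_nonneg _ _ hpow.le]
  refine max_le_max (le_of_eq ?_) ?_
  · rw [div_pow, ← mul_assoc, div_mul_cancel₀ _ (by positivity)]
  · calc ‖fun i => (q i : ℝ)‖ / t ≤ ‖fun i => (q i : ℝ)‖ / s :=
          div_le_div_of_nonneg_left (norm_nonneg _) hs hst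
      _ ≤ (t / s) ^ n * (‖fun i => (q i : ℝ)‖ / s) :=
          le_mul_of_one_le_left (by positivity) (one_le_pow₀ ((one_le_div hs).2 hst))

theorem tendsto_latticeDelta_gMat_mul_uMat_iff (x : Fin n → ℝ) :
    Tendsto (fun k : ℕ => latticeDelta (gMat n k * uMat x)) atTop (𝓝 0) ↔
      ∀ ε > 0, ∀ᶠ k : ℕ in atTop, HasShortVector x (exp k) ε := by
  simp_rw [tendsto_latticeDelta_zero_iff, norm_gMat_mul_uMat_mulVec]
  refine ⟨fun h ε hε => ?_, fun h ε hε => ?_⟩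
  · filter_upwards [h (min ε 1) (by positivity)] with k ⟨v, hv, hlt⟩
    refine ⟨Fin.tail v, fun hq => ?_, v 0, hlt.trans_le (min_le_left _ _)⟩
    have hv0 : v 0 ≠ 0 := fun h0 => hv <| funext fun i => Fin.cases h0 (congrFun hq) i
    rw [hq] at hlt
    exact (one_le_flowNorm_zero x (one_le_exp k.cast_nonneg) hv0).not_gt
      (hlt.trans_le (min_le_right _ _))
  · filter_upwards [h ε hε] with k ⟨q, hq, q₀, hlt⟩
    refine ⟨Fin.cons q₀ q, fun h => hq (funext fun i => ?_), by simpa using hlt⟩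
    simpa using congrFun h i.succ

theorem isSingularVec_iff_eventually_hasShortVector (x : Fin n → ℝ) :
    IsSingularVec x ↔ ∀ ε > 0, ∀ᶠ t : ℝ in atTop, HasShortVector x t ε := by
  refine ⟨fun hx ε hε => ?_, fun h c hc => ?_⟩
  · obtain ⟨Q₀, -, hQ⟩ := hx ((ε / 2) ^ (n + 1)) (by positivity)
    filter_upwards [eventually_gt_atTop 0, eventually_ge_atTop (Q₀ / (ε / 2))] with t ht htQ
    obtain ⟨q, hq, q₀, happrox, hbound⟩ :=
      hQ (ε / 2 * t) (by rwa [div_le_iff₀' (by positivity)] at htQ)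
    refine ⟨q, hq, q₀, max_lt ?_ ((div_lt_iff₀ ht).2 ?_)⟩
    · calc t ^ n * |∑ i, (q i : ℝ) * x i + q₀|
          < t ^ n * ((ε / 2) ^ (n + 1) / (ε / 2 * t) ^ n) := by gcongr
        _ = ε / 2 := by field_simp; ring
        _ < ε := half_lt_self hε
    · calc ‖fun i => (q i : ℝ)‖ ≤ ε / 2 * t :=
            (pi_norm_le_iff_of_nonneg (by positivity)).2 fun i => hbound i
        _ < ε * t := by gcongr; exact half_lt_self hε
  · set ε := min c 1
    have hε : 0 < ε := by positivity
    obtain ⟨T, hT⟩ := (h ε hε).exists_forall_of_atTop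
    refine ⟨ε * max T 1, by positivity, fun Q hQ => ?_⟩
    have ht : max T 1 ≤ Q / ε := by rwa [le_div_iff₀' (by positivity)]
    have htpos : 0 < Q / ε := zero_lt_one.trans_le ((le_max_right _ _).trans ht)
    have hQpos : 0 < Q := by simpa [hε] using htpos
    obtain ⟨q, hq, q₀, hlt⟩ := hT (Q / ε) ((le_max_left _ _).trans ht)
    rw [flowNorm, max_lt_iff] at hlt
    refine ⟨q, hq, q₀, ?_, fun i => ?_⟩
    · calc |∑ i, (q i : ℝ) * x i + q₀| < ε / (Q / ε) ^ n := by
            rw [lt_div_iff₀' (by positivity)]; exact hlt.1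
        _ = ε ^ (n + 1) / Q ^ n := by rw [div_pow, div_div_eq_mul_div, pow_succ']
        _ ≤ c / Q ^ n := by
            gcongr
            exact (pow_le_of_le_one hε.le (min_le_right _ _) n.succ_ne_zero).trans
              (min_le_left _ _)
    · have := (norm_le_pi_norm (fun i => (q i : ℝ)) i).trans_lt ((div_lt_iff₀ htpos).1 hlt.2)
      rw [mul_div_cancel₀ _ (by positivity)] at this
      exact this.le

theorem forall_eventually_hasShortVector_exp_iff (x : Fin n → ℝ) :
    (∀ ε > 0, ∀ᶠ k : ℕ in atTop, HasShortVector x (exp k) ε) ↔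
      ∀ ε > 0, ∀ᶠ t : ℝ in atTop, HasShortVector x t ε := by
  refine ⟨fun h ε hε => ?_, fun h ε hε =>
    (tendsto_exp_atTop.comp tendsto_natCast_atTop_atTop).eventually (h ε hε)⟩
  obtain ⟨K, hK⟩ := (h (ε / exp 1 ^ n) (by positivity)).exists_forall_of_atTop
  filter_upwards [eventually_ge_atTop (exp K)] with t ht
  have htpos : 0 < t := (exp_pos _).trans_le ht
  have hlog : (K : ℝ) ≤ log t := (le_log_iff_exp_le htpos).2 ht
  set k := ⌊log t⌋₊
  have hkt : exp k ≤ t :=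
    (exp_le_exp.2 (Nat.floor_le (K.cast_nonneg.trans hlog))).trans_eq (exp_log htpos)
  have htk : t / exp k ≤ exp 1 := by
    rw [div_le_iff₀' (exp_pos _), ← exp_add, ← exp_log htpos]
    exact exp_le_exp.2 (by linarith [Nat.lt_floor_add_one (log t)])
  obtain ⟨q, hq, q₀, hlt⟩ := (hK k (Nat.le_floor hlog)).of_le (exp_pos _) hkt
  refine ⟨q, hq, q₀, hlt.trans_le ?_⟩
  calc (t / exp k) ^ n * (ε / exp 1 ^ n) ≤ exp 1 ^ n * (ε / exp 1 ^ n) := by gcongr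
    _ = ε := mul_div_cancel₀ _ (by positivity)

end Flow

theorem stmt_7_general (n : ℕ) (x : Fin n → ℝ) :
    IsSingularVec x ↔
      Tendsto (fun k : ℕ => latticeDelta (gMat n k * uMat x)) atTop (nhds 0) := by
  rw [tendsto_latticeDelta_gMat_mul_uMat_iff, forall_eventually_hasShortVector_exp_iff,
    isSingularVec_iff_eventually_hasShortVector]

/-- Dani correspondence: `x` is singular iff `δ(g_k u_x ℤ^{n+1}) → 0` as `k → ∞`. -/
theorem stmt_7 (n : ℕ) (hn : 1 ≤ n) (x : Fin n → ℝ) :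
    IsSingularVec x ↔
      Tendsto (fun k : ℕ => latticeDelta (gMat n k * uMat x)) atTop (nhds 0) :=
  stmt_7_general n x
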